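/- arXiv:2602.12603 — 5 statements merged into one kernel-verified Lean document; each statement's English description precedes it below -/
import Mathlib

section
/- Let E = EuclideanSpace ℝ (Fin m) and let Q : E → ℝ be twice continuously differentiable with Hessian H(u) := ∇²Q(u) (a continuous symmetric bilinear form). Assume: (A1) there is L₂ > 0 with ‖H(u) − H(v)‖ ≤ L₂·‖u − v‖ in operator norm for all u, v ∈ E; the gradient of Q vanishes at u_ref, i.e., ∇Q(u_ref) = 0; define W(v,w) := −H(u_ref)(v,w) and the set 𝒮 := {u : W(u − u_ref, u − u_ref) ≤ D²} for some D > 0; (A2) there is μ > 0 such that H(u)(v,v) ≤ −μ²·‖v‖² for all u ∈ 𝒮 and all v ∈ E. Let 𝒰 ⊆ E, let u_W ∈ 𝒰 minimize u ↦ W(u − u_ref, u − u_ref) over 𝒰, let u⋆ ∈ 𝒰 maximize Q over 𝒰, and assume u_W ∈ 𝒮 and u⋆ ∈ 𝒮. Then |Q(u_W) − Q(u⋆)| ≤ L₂·D³/(3·μ³). -/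
/-!
Along the segment `t ↦ u_ref + t • δ`, a Lipschitz Hessian makes `Q` agree with its quadratic
model `Q u_ref - W δ δ / 2` up to `L₂ ‖δ‖³ / 6`: the remainder of the gradient grows like `t²`
and that of the value like `t³`, both by the fencing form of the mean value inequality.
Coercivity of `W` (the curvature bound at `u_ref`) puts `𝒮` inside the ball of radius `D / μ`.
Since `u_W` minimises the model's loss `W δ δ / 2` over `𝒰`, the values of `u_W` and `u⋆`
differ by at most twice the model error.
-/

open ContinuousLinearMap

theorem norm_le_of_norm_deriv_le_mul_pow {F : Type*} [NormedAddCommGroup F] [NormedSpace ℝ F]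
    {f f' : ℝ → F} {C : ℝ} {n : ℕ} (hf0 : f 0 = 0) (hf : ∀ t, HasDerivAt f (f' t) t)
    (hf' : ∀ t, 0 ≤ t → ‖f' t‖ ≤ C * t ^ n) {t : ℝ} (ht : 0 ≤ t) :
    ‖f t‖ ≤ C * t ^ (n + 1) / (n + 1) := by
  have hB : ∀ s : ℝ, HasDerivAt (fun s => C * s ^ (n + 1) / (n + 1)) (C * s ^ n) s := fun s => by
    have := ((hasDerivAt_pow (n + 1) s).const_mul C).div_const ((n : ℝ) + 1)
    refine this.congr_deriv ?_
    rw [Nat.add_sub_cancel]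
    push_cast
    field_simp
  exact image_norm_le_of_norm_deriv_right_le_deriv_boundary
    (fun s _ => (hf s).continuousAt.continuousWithinAt) (fun s _ => (hf s).hasDerivWithinAt)
    (by simp [hf0]) hB (fun s hs => hf' s hs.1) ⟨ht, le_rfl⟩

section Taylor

variable {E : Type*} [NormedAddCommGroup E] [NormedSpace ℝ E] {Q : E → ℝ} {L : ℝ}

theorem hasDerivAt_add_smul (a δ : E) (s : ℝ) : HasDerivAt (fun t : ℝ => a + t • δ) δ s := by
  simpa using ((hasDerivAt_id s).smul_const δ).const_add a

theorem norm_fderiv_sub_taylor_one_le (hQ' : Differentiable ℝ (fderiv ℝ Q))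
    (hLip : ∀ u v, ‖fderiv ℝ (fderiv ℝ Q) u - fderiv ℝ (fderiv ℝ Q) v‖ ≤ L * ‖u - v‖)
    (a δ : E) {t : ℝ} (ht : 0 ≤ t) :
    ‖fderiv ℝ Q (a + t • δ) - fderiv ℝ Q a - t • fderiv ℝ (fderiv ℝ Q) a δ‖
      ≤ L * ‖δ‖ ^ 2 * t ^ 2 / 2 := by
  set H := fderiv ℝ (fderiv ℝ Q)
  have hderiv : ∀ s : ℝ, HasDerivAt (fun s => fderiv ℝ Q (a + s • δ) - fderiv ℝ Q a - s • H a δ)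
      (H (a + s • δ) δ - H a δ) s := fun s => by
    have := (((hQ' _).hasFDerivAt.comp_hasDerivAt s (hasDerivAt_add_smul a δ s)).sub_const
      (fderiv ℝ Q a)).sub ((hasDerivAt_id s).smul_const (H a δ))
    simp only [one_smul] at this
    exact this
  have hbound : ∀ s : ℝ, 0 ≤ s → ‖H (a + s • δ) δ - H a δ‖ ≤ L * ‖δ‖ ^ 2 * s ^ 1 := fun s hs =>
    calc ‖H (a + s • δ) δ - H a δ‖ = ‖(H (a + s • δ) - H a) δ‖ := by
          rw [sub_apply]
      _ ≤ ‖H (a + s • δ) - H a‖ * ‖δ‖ := (H (a + s • δ) - H a).le_opNorm δ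
      _ ≤ L * ‖s • δ‖ * ‖δ‖ := by
          gcongr
          simpa using hLip (a + s • δ) a
      _ = L * ‖δ‖ ^ 2 * s ^ 1 := by rw [norm_smul, Real.norm_of_nonneg hs]; ring
  simpa only [Nat.cast_one, one_add_one_eq_two] using
    norm_le_of_norm_deriv_le_mul_pow (by simp) hderiv hbound ht

theorem abs_sub_taylor_two_le (hQ : Differentiable ℝ Q) (hQ' : Differentiable ℝ (fderiv ℝ Q))
    (hLip : ∀ u v, ‖fderiv ℝ (fderiv ℝ Q) u - fderiv ℝ (fderiv ℝ Q) v‖ ≤ L * ‖u - v‖)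
    (a δ : E) :
    |Q (a + δ) - Q a - fderiv ℝ Q a δ - fderiv ℝ (fderiv ℝ Q) a δ δ / 2| ≤ L * ‖δ‖ ^ 3 / 6 := by
  set H := fderiv ℝ (fderiv ℝ Q)
  have hderiv : ∀ s : ℝ, HasDerivAt
      (fun s => Q (a + s • δ) - Q a - s * fderiv ℝ Q a δ - s ^ 2 / 2 * H a δ δ)
      ((fderiv ℝ Q (a + s • δ) - fderiv ℝ Q a - s • H a δ) δ) s := fun s => by
    have hpow : HasDerivAt (fun s : ℝ => s ^ 2 / 2 * H a δ δ) (s * H a δ δ) s := by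
      simpa using ((hasDerivAt_pow 2 s).div_const 2).mul_const (H a δ δ)
    have := ((((hQ _).hasFDerivAt.comp_hasDerivAt s (hasDerivAt_add_smul a δ s)).sub_const
      (Q a)).sub ((hasDerivAt_id s).mul_const (fderiv ℝ Q a δ))).sub hpow
    simp only [one_mul, sub_apply, smul_apply, smul_eq_mul] at this ⊢
    exact this
  have hbound : ∀ s : ℝ, 0 ≤ s → ‖(fderiv ℝ Q (a + s • δ) - fderiv ℝ Q a - s • H a δ) δ‖
      ≤ L * ‖δ‖ ^ 3 / 2 * s ^ 2 := fun s hs =>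
    calc _ ≤ ‖fderiv ℝ Q (a + s • δ) - fderiv ℝ Q a - s • H a δ‖ * ‖δ‖ := le_opNorm _ _
      _ ≤ L * ‖δ‖ ^ 2 * s ^ 2 / 2 * ‖δ‖ := by
          gcongr; exact norm_fderiv_sub_taylor_one_le hQ' hLip a δ hs
      _ = _ := by ring
  have key := norm_le_of_norm_deriv_le_mul_pow (by simp) hderiv hbound zero_le_one
  simp only [one_smul, one_mul, one_pow, mul_one, Real.norm_eq_abs] at key
  calc _ = |Q (a + δ) - Q a - fderiv ℝ Q a δ - 1 / 2 * H a δ δ| := by ring_nf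
    _ ≤ L * ‖δ‖ ^ 3 / 2 / ((2 : ℕ) + 1) := key
    _ = L * ‖δ‖ ^ 3 / 6 := by norm_num; ring

end Taylor

/-- Theorem 1: Near-optimality of the Hessian-weighted
projection. Under a Lipschitz Hessian (A1), a vanishing gradient at `u_ref`,
and uniform negative definiteness of the Hessian on the weighted ball `𝒮`
(A2), the value gap between the weighted projection `u_W` and the safe
optimal action `u⋆` is at most `L₂D³/(3μ³)`. -/
theorem weighted_projection_near_optimality
    (m : ℕ)
    (Q : EuclideanSpace ℝ (Fin m) → ℝ)
    (hQ : ContDiff ℝ 2 Q)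
    (u_ref : EuclideanSpace ℝ (Fin m))
    (H : EuclideanSpace ℝ (Fin m) →
      EuclideanSpace ℝ (Fin m) →L[ℝ] EuclideanSpace ℝ (Fin m) →L[ℝ] ℝ)
    (hH : ∀ u, H u = fderiv ℝ (fderiv ℝ Q) u)
    (L₂ : ℝ) (hL₂ : 0 < L₂)
    (hLip : ∀ u v, ‖H u - H v‖ ≤ L₂ * ‖u - v‖)
    (hgrad : fderiv ℝ Q u_ref = 0)
    (W : EuclideanSpace ℝ (Fin m) →L[ℝ] EuclideanSpace ℝ (Fin m) →L[ℝ] ℝ)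
    (hW : W = -H u_ref)
    (D : ℝ) (hD : 0 < D)
    (S : Set (EuclideanSpace ℝ (Fin m)))
    (hS : S = {u | W (u - u_ref) (u - u_ref) ≤ D ^ 2})
    (μ : ℝ) (hμ : 0 < μ)
    (hcurv : ∀ u ∈ S, ∀ v : EuclideanSpace ℝ (Fin m),
      H u v v ≤ -μ ^ 2 * ‖v‖ ^ 2)
    (𝒰 : Set (EuclideanSpace ℝ (Fin m)))
    (uW uStar : EuclideanSpace ℝ (Fin m))
    (huW𝒰 : uW ∈ 𝒰) (huStar𝒰 : uStar ∈ 𝒰)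
    (huWmin : ∀ u ∈ 𝒰, W (uW - u_ref) (uW - u_ref) ≤ W (u - u_ref) (u - u_ref))
    (huStarmax : ∀ u ∈ 𝒰, Q u ≤ Q uStar)
    (huWS : uW ∈ S) (huStarS : uStar ∈ S) :
    |Q uW - Q uStar| ≤ L₂ * D ^ 3 / (3 * μ ^ 3) := by
  obtain rfl : H = fderiv ℝ (fderiv ℝ Q) := funext hH
  have hrefS : u_ref ∈ S := by simp [hS, sq_nonneg]
  have hcoercive : ∀ v, μ ^ 2 * ‖v‖ ^ 2 ≤ W v v := fun v => by
    have := hcurv u_ref hrefS v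
    rw [hW, neg_apply, neg_apply]
    linarith
  have hmodel : ∀ u ∈ S,
      |Q u - Q u_ref + W (u - u_ref) (u - u_ref) / 2| ≤ L₂ * D ^ 3 / (6 * μ ^ 3) := by
    intro u hu
    have hradius : ‖u - u_ref‖ ≤ D / μ := by
      rw [le_div_iff₀ hμ, mul_comm, ← pow_le_pow_iff_left₀ (by positivity) hD.le two_ne_zero,
        mul_pow]
      exact (hcoercive _).trans (by simpa [hS] using hu)
    calc |Q u - Q u_ref + W (u - u_ref) (u - u_ref) / 2| ≤ L₂ * ‖u - u_ref‖ ^ 3 / 6 := by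
          have h := abs_sub_taylor_two_le (hQ.differentiable (by norm_num))
            ((hQ.fderiv_right le_rfl).differentiable one_ne_zero) hLip u_ref (u - u_ref)
          rw [add_sub_cancel, hgrad, zero_apply, sub_zero] at h
          rwa [hW, neg_apply, neg_apply, neg_div, ← sub_eq_add_neg]
      _ ≤ L₂ * (D / μ) ^ 3 / 6 := by gcongr
      _ = L₂ * D ^ 3 / (6 * μ ^ 3) := by field_simp
  have hUW := abs_le.mp (hmodel uW huWS)
  have hUStar := abs_le.mp (hmodel uStar huStarS)
  have hWle := huWmin uStar huStar𝒰
  rw [abs_sub_comm, abs_of_nonneg (sub_nonneg.mpr (huStarmax uW huW𝒰))]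
  linarith [show L₂ * D ^ 3 / (3 * μ ^ 3) = 2 * (L₂ * D ^ 3 / (6 * μ ^ 3)) by field_simp; ring]
end

section
/- Let E = EuclideanSpace ℝ (Fin m) and let Q : E → ℝ be twice continuously differentiable with Hessian H(u) := ∇²Q(u). Assume ‖H(u) − H(v)‖ ≤ L₂·‖u − v‖ for all u, v (L₂ > 0), ∇Q(u_ref) = 0, W := −H(u_ref), 𝒮 := {u : W(u − u_ref, u − u_ref) ≤ D²} with D > 0, and H(u)(v,v) ≤ −μ²·‖v‖² for all u ∈ 𝒮 and all v (μ > 0). Let 𝒰 ⊆ E, let u_W ∈ 𝒰 minimize u ↦ W(u − u_ref, u − u_ref) over 𝒰, let u_I ∈ 𝒰, and assume u_W, u_I ∈ 𝒮. Write δ := ‖u_W − u_ref‖_W with δ > 0, suppose ‖u_I − u_ref‖_W = β·δ for some β > 1, and set c := (β² − 1)/2. If μ³/L₂ ≥ D³/(3·c·δ²), then Q(u_W) ≥ Q(u_I). -/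
/-!
Expanding `Q` to second order at the critical point `u_ref`, where the Hessian is `-W`, gives
`Q u ≈ Q u_ref - ‖u - u_ref‖_W² / 2` with a cubic Taylor error at most `L₂ / 6 · ‖u - u_ref‖³`.
Strong concavity on `𝒮` makes `W` coercive, `W(v, v) ≥ μ² ‖v‖²`, so every point of `𝒮` lies
within Euclidean distance `D / μ` of `u_ref`. Hence `Q u_W - Q u_I ≥ c δ² - L₂ / 3 · (D / μ)³`,
which the hypothesis on `μ³ / L₂` makes nonnegative.
-/

theorem norm_le_mul_pow_succ_div_of_norm_deriv_le {E : Type*} [NormedAddCommGroup E]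
    [NormedSpace ℝ E] {f f' : ℝ → E} {C : ℝ} (n : ℕ) (hf : ∀ t, HasDerivAt f (f' t) t)
    (hf0 : f 0 = 0) (bound : ∀ t, 0 ≤ t → ‖f' t‖ ≤ C * t ^ n) {t : ℝ} (ht : 0 ≤ t) :
    ‖f t‖ ≤ C * t ^ (n + 1) / (n + 1) := by
  have hB : ∀ s : ℝ, HasDerivAt (fun s => C * s ^ (n + 1) / (n + 1)) (C * s ^ n) s := by
    intro s
    refine (((hasDerivAt_pow (n + 1) s).const_mul C).div_const ((n : ℝ) + 1)).congr_deriv ?_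
    push_cast
    field_simp
  refine image_norm_le_of_norm_deriv_right_le_deriv_boundary (a := 0) (b := t)
    (fun s _ => (hf s).continuousAt.continuousWithinAt) (fun s _ => (hf s).hasDerivWithinAt)
    (by simp [hf0]) hB (fun s hs => bound s hs.1) ⟨ht, le_rfl⟩

theorem norm_taylor_two_remainder_le {E F : Type*} [NormedAddCommGroup E] [NormedSpace ℝ E]
    [NormedAddCommGroup F] [NormedSpace ℝ F] {f : E → F} (hf : Differentiable ℝ f)
    (hf' : Differentiable ℝ (fderiv ℝ f)) {x : E} {L : ℝ}
    (hL : ∀ y, ‖fderiv ℝ (fderiv ℝ f) y - fderiv ℝ (fderiv ℝ f) x‖ ≤ L * ‖y - x‖) (d : E) :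
    ‖f (x + d) - f x - fderiv ℝ f x d - (2⁻¹ : ℝ) • fderiv ℝ (fderiv ℝ f) x d d‖
      ≤ L / 6 * ‖d‖ ^ 3 := by
  set f'' := fderiv ℝ (fderiv ℝ f)
  -- The remainders of order one and two along `t ↦ x + t • d` vanish at `0`, the second is a
  -- primitive of the first, so the Lipschitz bound `L ‖d‖³ t` integrates to `t² / 2`, then `t³ / 6`.
  have hline : ∀ t : ℝ, HasDerivAt (fun t : ℝ => x + t • d) d t := fun t => by
    simpa using ((hasDerivAt_id t).smul_const d).const_add x
  have hr₁_deriv : ∀ t : ℝ,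
      HasDerivAt (fun t => fderiv ℝ f (x + t • d) d - fderiv ℝ f x d - t • f'' x d d)
        (f'' (x + t • d) d d - f'' x d d) t := fun t => by
    have := ((hf' _).hasFDerivAt.comp_hasDerivAt t (hline t)).clm_apply (hasDerivAt_const t d)
    exact ((this.sub_const _).sub ((hasDerivAt_id t).smul_const (f'' x d d))).congr_deriv
      (by simp [f''])
  have hr₂_deriv : ∀ t : ℝ, HasDerivAt
      (fun t => f (x + t • d) - f x - t • fderiv ℝ f x d - (t ^ 2 / 2) • f'' x d d)
      (fderiv ℝ f (x + t • d) d - fderiv ℝ f x d - t • f'' x d d) t := fun t => by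
    have := (hf _).hasFDerivAt.comp_hasDerivAt t (hline t)
    exact (((this.sub_const _).sub ((hasDerivAt_id t).smul_const (fderiv ℝ f x d))).sub
      (((hasDerivAt_pow 2 t).div_const 2).smul_const (f'' x d d))).congr_deriv (by simp)
  have hr₁_le : ∀ t : ℝ, 0 ≤ t →
      ‖fderiv ℝ f (x + t • d) d - fderiv ℝ f x d - t • f'' x d d‖ ≤ L * ‖d‖ ^ 3 / 2 * t ^ 2 := by
    refine fun t ht => (norm_le_mul_pow_succ_div_of_norm_deriv_le (C := L * ‖d‖ ^ 3) 1
      hr₁_deriv (by simp) (fun s hs => ?_) ht).trans_eq (by ring)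
    calc ‖f'' (x + s • d) d d - f'' x d d‖ = ‖(f'' (x + s • d) - f'' x) d d‖ := rfl
      _ ≤ ‖f'' (x + s • d) - f'' x‖ * ‖d‖ * ‖d‖ := (f'' (x + s • d) - f'' x).le_opNorm₂ d d
      _ ≤ L * (s * ‖d‖) * ‖d‖ * ‖d‖ := by
        gcongr
        simpa [norm_smul, abs_of_nonneg hs] using hL (x + s • d)
      _ = L * ‖d‖ ^ 3 * s ^ 1 := by ring
  simpa using (norm_le_mul_pow_succ_div_of_norm_deriv_le 2 hr₂_deriv (by simp) hr₁_le
    zero_le_one).trans_eq (by ring)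

theorem le_div_of_sq_mul_sq_le_sq {a μ D : ℝ} (hμ : 0 < μ) (ha : 0 ≤ a) (hD : 0 ≤ D)
    (h : μ ^ 2 * a ^ 2 ≤ D ^ 2) : a ≤ D / μ := by
  rw [le_div_iff₀ hμ, ← pow_le_pow_iff_left₀ (by positivity) hD two_ne_zero]
  linarith

theorem div_three_mul_div_pow_three_le {L D μ a : ℝ} (hL : 0 < L) (hμ : 0 < μ) (ha : 0 < a)
    (h : D ^ 3 / (3 * a) ≤ μ ^ 3 / L) : L / 3 * (D / μ) ^ 3 ≤ a := by
  rw [div_le_div_iff₀ (by positivity) hL] at h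
  rw [div_pow, ← sub_nonneg]
  field_simp
  nlinarith

theorem weighted_beats_euclidean_condition_general
    (m : ℕ)
    (Q : EuclideanSpace ℝ (Fin m) → ℝ)
    (hQ : ContDiff ℝ 2 Q)
    (u_ref : EuclideanSpace ℝ (Fin m))
    (H : EuclideanSpace ℝ (Fin m) →
      EuclideanSpace ℝ (Fin m) →L[ℝ] EuclideanSpace ℝ (Fin m) →L[ℝ] ℝ)
    (hH : ∀ u, H u = fderiv ℝ (fderiv ℝ Q) u)
    (L₂ : ℝ) (hL₂ : 0 < L₂)
    (hLip : ∀ u v, ‖H u - H v‖ ≤ L₂ * ‖u - v‖)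
    (hgrad : fderiv ℝ Q u_ref = 0)
    (W : EuclideanSpace ℝ (Fin m) →L[ℝ] EuclideanSpace ℝ (Fin m) →L[ℝ] ℝ)
    (hW : W = -H u_ref)
    (D : ℝ) (hD : 0 < D)
    (S : Set (EuclideanSpace ℝ (Fin m)))
    (hS : S = {u | W (u - u_ref) (u - u_ref) ≤ D ^ 2})
    (μ : ℝ) (hμ : 0 < μ)
    (hcurv : ∀ u ∈ S, ∀ v : EuclideanSpace ℝ (Fin m),
      H u v v ≤ -μ ^ 2 * ‖v‖ ^ 2)
    (uW uI : EuclideanSpace ℝ (Fin m))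
    (huWS : uW ∈ S) (huIS : uI ∈ S)
    (δ : ℝ) (hδ : δ = Real.sqrt (W (uW - u_ref) (uW - u_ref)))
    (hδpos : 0 < δ)
    (β : ℝ) (hβ : 1 < β)
    (hβδ : Real.sqrt (W (uI - u_ref) (uI - u_ref)) = β * δ)
    (c : ℝ) (hc : c = (β ^ 2 - 1) / 2)
    (hcond : μ ^ 3 / L₂ ≥ D ^ 3 / (3 * c * δ ^ 2)) :
    Q uW ≥ Q uI := by
  have hHess : fderiv ℝ (fderiv ℝ Q) = H := funext fun u => (hH u).symm
  have hHW : ∀ v, H u_ref v v = -W v v := fun v => by simp [hW]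
  have hW_coercive : ∀ v, μ ^ 2 * ‖v‖ ^ 2 ≤ W v v := fun v => by
    have := hcurv u_ref (by simp [hS]; positivity) v
    linarith [hHW v]
  have hquad : ∀ u ∈ S,
      |Q u - Q u_ref + W (u - u_ref) (u - u_ref) / 2| ≤ L₂ / 6 * (D / μ) ^ 3 := by
    intro u hu
    have htaylor := norm_taylor_two_remainder_le (hQ.differentiable two_ne_zero)
      ((hQ.fderiv_right le_rfl).differentiable one_ne_zero)
      (fun y => by simpa [hHess] using hLip y u_ref) (u - u_ref)
    have hdist : ‖u - u_ref‖ ≤ D / μ := le_div_of_sq_mul_sq_le_sq hμ (norm_nonneg _) hD.le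
      ((hW_coercive _).trans (by simpa [hS] using hu))
    simp only [add_sub_cancel, hgrad, hHess, hHW, zero_apply, sub_zero, smul_eq_mul,
      Real.norm_eq_abs] at htaylor
    calc |Q u - Q u_ref + W (u - u_ref) (u - u_ref) / 2|
        = |Q u - Q u_ref - 2⁻¹ * -W (u - u_ref) (u - u_ref)| := by ring_nf
      _ ≤ L₂ / 6 * ‖u - u_ref‖ ^ 3 := htaylor
      _ ≤ L₂ / 6 * (D / μ) ^ 3 := by gcongr
  have hWδ : W (uW - u_ref) (uW - u_ref) = δ ^ 2 := by
    rw [hδ, Real.sq_sqrt ((hW_coercive _).trans' (by positivity))]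
  have hWβδ : W (uI - u_ref) (uI - u_ref) = (β * δ) ^ 2 := by
    rw [← hβδ, Real.sq_sqrt ((hW_coercive _).trans' (by positivity))]
  have hc_pos : 0 < c := by rw [hc]; nlinarith
  have hslack : L₂ / 3 * (D / μ) ^ 3 ≤ c * δ ^ 2 :=
    div_three_mul_div_pow_three_le hL₂ hμ (by positivity) (by rwa [← mul_assoc])
  rw [hc] at hslack
  linarith [abs_le.mp (hquad uW huWS), abs_le.mp (hquad uI huIS)]

/-- Theorem 2, sufficient condition: Under A1–A2, with `δ` the weighted
projection distance of `u_W`, `‖u_I − u_ref‖_W = β·δ` for some `β > 1`, and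
`c = (β² − 1)/2`, if `μ³/L₂ ≥ D³/(3cδ²)` then the Hessian-weighted projection is no worse
than the competing feasible action `u_I`: `Q(u_W) ≥ Q(u_I)`. -/
theorem weighted_beats_euclidean_condition
    (m : ℕ)
    (Q : EuclideanSpace ℝ (Fin m) → ℝ)
    (hQ : ContDiff ℝ 2 Q)
    (u_ref : EuclideanSpace ℝ (Fin m))
    (H : EuclideanSpace ℝ (Fin m) →
      EuclideanSpace ℝ (Fin m) →L[ℝ] EuclideanSpace ℝ (Fin m) →L[ℝ] ℝ)
    (hH : ∀ u, H u = fderiv ℝ (fderiv ℝ Q) u)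
    (L₂ : ℝ) (hL₂ : 0 < L₂)
    (hLip : ∀ u v, ‖H u - H v‖ ≤ L₂ * ‖u - v‖)
    (hgrad : fderiv ℝ Q u_ref = 0)
    (W : EuclideanSpace ℝ (Fin m) →L[ℝ] EuclideanSpace ℝ (Fin m) →L[ℝ] ℝ)
    (hW : W = -H u_ref)
    (D : ℝ) (hD : 0 < D)
    (S : Set (EuclideanSpace ℝ (Fin m)))
    (hS : S = {u | W (u - u_ref) (u - u_ref) ≤ D ^ 2})
    (μ : ℝ) (hμ : 0 < μ)
    (hcurv : ∀ u ∈ S, ∀ v : EuclideanSpace ℝ (Fin m),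
      H u v v ≤ -μ ^ 2 * ‖v‖ ^ 2)
    (𝒰 : Set (EuclideanSpace ℝ (Fin m)))
    (uW uI : EuclideanSpace ℝ (Fin m))
    (huW𝒰 : uW ∈ 𝒰) (huI𝒰 : uI ∈ 𝒰)
    (huWmin : ∀ u ∈ 𝒰, W (uW - u_ref) (uW - u_ref) ≤ W (u - u_ref) (u - u_ref))
    (huWS : uW ∈ S) (huIS : uI ∈ S)
    (δ : ℝ) (hδ : δ = Real.sqrt (W (uW - u_ref) (uW - u_ref)))
    (hδpos : 0 < δ)
    (β : ℝ) (hβ : 1 < β)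
    (hβδ : Real.sqrt (W (uI - u_ref) (uI - u_ref)) = β * δ)
    (c : ℝ) (hc : c = (β ^ 2 - 1) / 2)
    (hcond : μ ^ 3 / L₂ ≥ D ^ 3 / (3 * c * δ ^ 2)) :
    Q uW ≥ Q uI :=
  weighted_beats_euclidean_condition_general m Q hQ u_ref H hH L₂ hL₂ hLip hgrad W hW D hD S hS μ hμ
    hcurv uW uI huWS huIS δ hδ hδpos β hβ hβδ c hc hcond
end

section
/- Let E = EuclideanSpace ℝ (Fin m), let u_ref ∈ E, and let W, Ŵ : E → E be symmetric positive semidefinite linear maps with ⟪v, W v⟫ ≥ μ²·‖v‖² for all v (μ > 0) and ‖Ŵ − W‖ ≤ ρ in operator norm, where 0 ≤ ρ < μ². Define φ(u) := (1/2)·⟪u − u_ref, W(u − u_ref)⟫ and φ̂(u) := (1/2)·⟪u − u_ref, Ŵ(u − u_ref)⟫, let 𝒰 ⊆ E be a convex set, let u_W ∈ 𝒰 minimize φ over 𝒰 and û_W ∈ 𝒰 minimize φ̂ over 𝒰, and assume both u_W and û_W lie in 𝒮 := {u : ⟪u − u_ref, W(u − u_ref)⟫ ≤ D²} for some D > 0.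 Then ‖û_W − u_W‖ ≤ √(2ρ)·D/μ². -/
/-! Write `‖v‖²_A := ⟪v, A v⟫`. If `a` minimizes `‖u - c‖²_A` over a convex set, the first-order
condition at `a` in the direction of any competitor `b` yields the Pythagorean-type inequality
`‖a - c‖²_A + ‖b - a‖²_A ≤ ‖b - c‖²_A`. Apply it to `u_W` against `û_W` for `W`, and to `û_W`
against `u_W` for `Ŵ`, and add: with `d = û_W - u_W`, the cross terms leave
`‖d‖²_W + ‖d‖²_Ŵ ≤ ρ (‖u_W - u_ref‖² + ‖û_W - u_ref‖²)`. Drop `‖d‖²_Ŵ ≥ 0` and bound both norms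
on the right by `D / μ` through `μ² ‖v‖² ≤ ‖v‖²_W`; then `μ² ‖d‖² ≤ 2ρD² / μ²`. -/

open scoped RealInnerProductSpace

section
variable {E : Type*} [NormedAddCommGroup E] [InnerProductSpace ℝ E]

theorem hasFDerivAt_inner_sub_apply_sub (A : E →L[ℝ] E) (c a : E) :
    HasFDerivAt (fun u => ⟪u - c, A (u - c)⟫)
      ((fderivInnerCLM ℝ (a - c, A (a - c))).comp
        ((ContinuousLinearMap.id ℝ E).prod A)) a := by
  have hsub : HasFDerivAt (fun u : E => u - c) (ContinuousLinearMap.id ℝ E) a :=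
    (hasFDerivAt_id a).sub_const c
  exact hsub.inner ℝ (A.hasFDerivAt.comp a hsub)

theorem IsMinOn.inner_sub_apply_add_nonneg {A : E →L[ℝ] E} {𝒰 : Set E} (h𝒰 : Convex ℝ 𝒰)
    {c a b : E} (hmin : IsMinOn (fun u => ⟪u - c, A (u - c)⟫) 𝒰 a) (ha : a ∈ 𝒰) (hb : b ∈ 𝒰) :
    0 ≤ ⟪a - c, A (b - a)⟫ + ⟪b - a, A (a - c)⟫ := by
  have := hmin.localize.hasFDerivWithinAt_nonneg
    (hasFDerivAt_inner_sub_apply_sub A c a).hasFDerivWithinAt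
    (sub_mem_posTangentConeAt_of_segment_subset (h𝒰.segment_subset ha hb))
  simpa [fderivInnerCLM_apply] using this

theorem IsMinOn.inner_sub_apply_sub_add_le {A : E →L[ℝ] E} {𝒰 : Set E} (h𝒰 : Convex ℝ 𝒰)
    {c a b : E} (hmin : IsMinOn (fun u => ⟪u - c, A (u - c)⟫) 𝒰 a) (ha : a ∈ 𝒰) (hb : b ∈ 𝒰) :
    ⟪a - c, A (a - c)⟫ + ⟪b - a, A (b - a)⟫ ≤ ⟪b - c, A (b - c)⟫ := by
  have hsplit : b - c = (a - c) + (b - a) := by abel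
  have hcross := hmin.inner_sub_apply_add_nonneg h𝒰 ha hb
  rw [hsplit, map_add, inner_add_left, inner_add_right, inner_add_right]
  linarith

theorem abs_inner_apply_self_sub_le (A B : E →L[ℝ] E) (v : E) :
    |⟪v, B v⟫ - ⟪v, A v⟫| ≤ ‖B - A‖ * ‖v‖ ^ 2 :=
  calc |⟪v, B v⟫ - ⟪v, A v⟫| = |⟪v, (B - A) v⟫| := by
        rw [_root_.sub_apply, inner_sub_right]
    _ ≤ ‖v‖ * ‖(B - A) v‖ := abs_real_inner_le_norm _ _
    _ ≤ ‖v‖ * (‖B - A‖ * ‖v‖) := by gcongr; exact (B - A).le_opNorm v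
    _ = ‖B - A‖ * ‖v‖ ^ 2 := by ring

theorem inner_sub_apply_sub_le_of_isMinOn {A B : E →L[ℝ] E} (hB : ∀ v, 0 ≤ ⟪v, B v⟫)
    {𝒰 : Set E} (h𝒰 : Convex ℝ 𝒰) {c a b : E} (ha : a ∈ 𝒰) (hb : b ∈ 𝒰)
    (haA : IsMinOn (fun u => ⟪u - c, A (u - c)⟫) 𝒰 a)
    (hbB : IsMinOn (fun u => ⟪u - c, B (u - c)⟫) 𝒰 b) :
    ⟪b - a, A (b - a)⟫ ≤ ‖B - A‖ * (‖a - c‖ ^ 2 + ‖b - c‖ ^ 2) := by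
  have hgapA := haA.inner_sub_apply_sub_add_le h𝒰 ha hb
  have hgapB := hbB.inner_sub_apply_sub_add_le h𝒰 hb ha
  have hflip : ⟪a - b, B (a - b)⟫ = ⟪b - a, B (b - a)⟫ := by
    rw [← neg_sub b a, map_neg, inner_neg_neg]
  have hpos := hB (b - a)
  have hpa := (abs_le.1 (abs_inner_apply_self_sub_le A B (a - c))).2
  have hpb := (abs_le.1 (abs_inner_apply_self_sub_le A B (b - c))).1
  linarith

end

theorem learned_projection_gap_bound_general
    (m : ℕ) (u_ref : EuclideanSpace ℝ (Fin m))
    (W Wh : EuclideanSpace ℝ (Fin m) →L[ℝ] EuclideanSpace ℝ (Fin m))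
    (hWhpsd : ∀ v : EuclideanSpace ℝ (Fin m), 0 ≤ ⟪v, Wh v⟫)
    (μ : ℝ) (hμ : 0 < μ)
    (hWlb : ∀ v : EuclideanSpace ℝ (Fin m), μ ^ 2 * ‖v‖ ^ 2 ≤ ⟪v, W v⟫)
    (ρ : ℝ)
    (herr : ‖Wh - W‖ ≤ ρ)
    (φ φh : EuclideanSpace ℝ (Fin m) → ℝ)
    (hφ : ∀ u, φ u = (1 / 2) * ⟪u - u_ref, W (u - u_ref)⟫)
    (hφh : ∀ u, φh u = (1 / 2) * ⟪u - u_ref, Wh (u - u_ref)⟫)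
    (𝒰 : Set (EuclideanSpace ℝ (Fin m))) (h𝒰 : Convex ℝ 𝒰)
    (uW uhW : EuclideanSpace ℝ (Fin m))
    (huW : uW ∈ 𝒰) (huhW : uhW ∈ 𝒰)
    (huWmin : ∀ u ∈ 𝒰, φ uW ≤ φ u)
    (huhWmin : ∀ u ∈ 𝒰, φh uhW ≤ φh u)
    (D : ℝ) (hD : 0 < D)
    (S : Set (EuclideanSpace ℝ (Fin m)))
    (hS : S = {u | ⟪u - u_ref, W (u - u_ref)⟫ ≤ D ^ 2})
    (huWS : uW ∈ S) (huhWS : uhW ∈ S) :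
    ‖uhW - uW‖ ≤ Real.sqrt (2 * ρ) * D / μ ^ 2 := by
  have hρ : 0 ≤ ρ := (norm_nonneg _).trans herr
  have hμ2 : 0 < μ ^ 2 := by positivity
  have hminW : IsMinOn (fun u => ⟪u - u_ref, W (u - u_ref)⟫) 𝒰 uW :=
    isMinOn_iff.2 fun u hu => by linarith [huWmin u hu, hφ uW, hφ u]
  have hminWh : IsMinOn (fun u => ⟪u - u_ref, Wh (u - u_ref)⟫) 𝒰 uhW :=
    isMinOn_iff.2 fun u hu => by linarith [huhWmin u hu, hφh uhW, hφh u]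
  have hball : ∀ u ∈ S, μ ^ 2 * ‖u - u_ref‖ ^ 2 ≤ D ^ 2 := by
    intro u hu
    rw [hS] at hu
    exact (hWlb _).trans hu
  have hgap := inner_sub_apply_sub_le_of_isMinOn hWhpsd h𝒰 huW huhW hminW hminWh
  have hsq : μ ^ 2 * (μ ^ 2 * ‖uhW - uW‖ ^ 2) ≤ 2 * ρ * D ^ 2 :=
    calc μ ^ 2 * (μ ^ 2 * ‖uhW - uW‖ ^ 2)
        ≤ μ ^ 2 * (‖Wh - W‖ * (‖uW - u_ref‖ ^ 2 + ‖uhW - u_ref‖ ^ 2)) :=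
          mul_le_mul_of_nonneg_left ((hWlb _).trans hgap) hμ2.le
      _ ≤ ρ * (μ ^ 2 * ‖uW - u_ref‖ ^ 2 + μ ^ 2 * ‖uhW - u_ref‖ ^ 2) := by
          rw [mul_left_comm, mul_add]; gcongr
      _ ≤ ρ * (D ^ 2 + D ^ 2) := by gcongr; exacts [hball uW huWS, hball uhW huhWS]
      _ = 2 * ρ * D ^ 2 := by ring
  rw [le_div_iff₀ hμ2, ← Real.sqrt_sq hD.le, ← Real.sqrt_mul (by linarith),
    Real.le_sqrt (by positivity) (mul_nonneg (by linarith) (sq_nonneg D))]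
  linarith

/-- Training-error bound on the learned weighted projection.
If `W, Ŵ` are symmetric positive semidefinite with `W ⪰ μ²·I` and
`‖Ŵ − W‖ ≤ ρ < μ²`, and `u_W`, `û_W` minimize the respective weighted
half-squared-distance objectives over a convex set `𝒰` and lie in the weighted
ball `𝒮` of radius `D`, then `‖û_W − u_W‖ ≤ √(2ρ)·D/μ²`. -/
theorem learned_projection_gap_bound
    (m : ℕ) (u_ref : EuclideanSpace ℝ (Fin m))
    (W Wh : EuclideanSpace ℝ (Fin m) →L[ℝ] EuclideanSpace ℝ (Fin m))
    (hWsym : ∀ v w : EuclideanSpace ℝ (Fin m), ⟪W v, w⟫ = ⟪v, W w⟫)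
    (hWhsym : ∀ v w : EuclideanSpace ℝ (Fin m), ⟪Wh v, w⟫ = ⟪v, Wh w⟫)
    (hWpsd : ∀ v : EuclideanSpace ℝ (Fin m), 0 ≤ ⟪v, W v⟫)
    (hWhpsd : ∀ v : EuclideanSpace ℝ (Fin m), 0 ≤ ⟪v, Wh v⟫)
    (μ : ℝ) (hμ : 0 < μ)
    (hWlb : ∀ v : EuclideanSpace ℝ (Fin m), μ ^ 2 * ‖v‖ ^ 2 ≤ ⟪v, W v⟫)
    (ρ : ℝ) (hρ0 : 0 ≤ ρ) (hρμ : ρ < μ ^ 2)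
    (herr : ‖Wh - W‖ ≤ ρ)
    (φ φh : EuclideanSpace ℝ (Fin m) → ℝ)
    (hφ : ∀ u, φ u = (1 / 2) * ⟪u - u_ref, W (u - u_ref)⟫)
    (hφh : ∀ u, φh u = (1 / 2) * ⟪u - u_ref, Wh (u - u_ref)⟫)
    (𝒰 : Set (EuclideanSpace ℝ (Fin m))) (h𝒰 : Convex ℝ 𝒰)
    (uW uhW : EuclideanSpace ℝ (Fin m))
    (huW : uW ∈ 𝒰) (huhW : uhW ∈ 𝒰)
    (huWmin : ∀ u ∈ 𝒰, φ uW ≤ φ u)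
    (huhWmin : ∀ u ∈ 𝒰, φh uhW ≤ φh u)
    (D : ℝ) (hD : 0 < D)
    (S : Set (EuclideanSpace ℝ (Fin m)))
    (hS : S = {u | ⟪u - u_ref, W (u - u_ref)⟫ ≤ D ^ 2})
    (huWS : uW ∈ S) (huhWS : uhW ∈ S) :
    ‖uhW - uW‖ ≤ Real.sqrt (2 * ρ) * D / μ ^ 2 :=
  learned_projection_gap_bound_general m u_ref W Wh hWhpsd μ hμ hWlb ρ herr φ φh hφ hφh 𝒰 h𝒰 uW uhW
    huW huhW huWmin huhWmin D hD S hS huWS huhWS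
end

section
/- Let E = EuclideanSpace ℝ (Fin m), let u_ref ∈ E, let W, Ŵ : E → E be symmetric linear maps with ⟪v, W v⟫ ≥ μ²·‖v‖² for all v (μ > 0) and ‖Ŵ − W‖ ≤ ρ in operator norm. Define φ(u) := (1/2)·⟪u − u_ref, W(u − u_ref)⟫ and φ̂(u) := (1/2)·⟪u − u_ref, Ŵ(u − u_ref)⟫, let 𝒰 ⊆ E, let u_W ∈ 𝒰 minimize φ over 𝒰 and û_W ∈ 𝒰 minimize φ̂ over 𝒰, and assume u_W, û_W ∈ 𝒮 := {u : ⟪u − u_ref, W(u − u_ref)⟫ ≤ D²} for some D > 0. Then φ(û_W) − φ(u_W) ≤ ρ·D²/μ². -/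
open scoped RealInnerProductSpace

/-! The ideal objective exceeds its learned counterpart by at most `ρ/2 · ‖u - u_ref‖²`, and the
coercivity `W ⪰ μ²` turns membership in the weighted ball into `‖u - u_ref‖² ≤ D²/μ²`. Comparing
`û_W` with `u_W` through `φ̂`, which `û_W` minimizes, costs this error once at each point. -/

theorem abs_inner_apply_sub_inner_apply_le {E : Type*} [NormedAddCommGroup E]
    [InnerProductSpace ℝ E] (A B : E →L[ℝ] E) (v : E) :
    |⟪v, A v⟫ - ⟪v, B v⟫| ≤ ‖A - B‖ * ‖v‖ ^ 2 := by
  rw [← inner_sub_right, ← sub_apply]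
  calc |⟪v, (A - B) v⟫| ≤ ‖v‖ * ‖(A - B) v‖ := abs_real_inner_le_norm _ _
    _ ≤ ‖v‖ * (‖A - B‖ * ‖v‖) := by gcongr; exact (A - B).le_opNorm v
    _ = ‖A - B‖ * ‖v‖ ^ 2 := by ring

theorem IsMinOn.sub_le_of_abs_sub_le {α : Type*} {f g : α → ℝ} {s : Set α} {a b : α} {ε : ℝ}
    (hmin : IsMinOn g s a) (hb : b ∈ s) (ha : |g a - f a| ≤ ε) (hb' : |g b - f b| ≤ ε) :
    f a - f b ≤ 2 * ε := by
  have hab : g a ≤ g b := isMinOn_iff.1 hmin b hb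
  linarith [(abs_le.1 ha).1, (abs_le.1 hb').2]

theorem learned_projection_objective_gap_general
    (m : ℕ) (u_ref : EuclideanSpace ℝ (Fin m))
    (W Wh : EuclideanSpace ℝ (Fin m) →L[ℝ] EuclideanSpace ℝ (Fin m))
    (μ : ℝ) (hμ : 0 < μ)
    (hWlb : ∀ v : EuclideanSpace ℝ (Fin m), μ ^ 2 * ‖v‖ ^ 2 ≤ ⟪v, W v⟫)
    (ρ : ℝ) (herr : ‖Wh - W‖ ≤ ρ)
    (φ φh : EuclideanSpace ℝ (Fin m) → ℝ)
    (hφ : ∀ u, φ u = (1 / 2) * ⟪u - u_ref, W (u - u_ref)⟫)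
    (hφh : ∀ u, φh u = (1 / 2) * ⟪u - u_ref, Wh (u - u_ref)⟫)
    (𝒰 : Set (EuclideanSpace ℝ (Fin m)))
    (uW uhW : EuclideanSpace ℝ (Fin m))
    (huW : uW ∈ 𝒰)
    (huhWmin : ∀ u ∈ 𝒰, φh uhW ≤ φh u)
    (D : ℝ)
    (S : Set (EuclideanSpace ℝ (Fin m)))
    (hS : S = {u | ⟪u - u_ref, W (u - u_ref)⟫ ≤ D ^ 2})
    (huWS : uW ∈ S) (huhWS : uhW ∈ S) :
    φ uhW - φ uW ≤ ρ * D ^ 2 / μ ^ 2 := by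
  subst hS
  have hρ : 0 ≤ ρ := (norm_nonneg _).trans herr
  have hclose : ∀ u ∈ {u | ⟪u - u_ref, W (u - u_ref)⟫ ≤ D ^ 2},
      |φh u - φ u| ≤ ρ * (D ^ 2 / μ ^ 2) / 2 := by
    intro u hu
    have hnorm : ‖u - u_ref‖ ^ 2 ≤ D ^ 2 / μ ^ 2 :=
      (le_div_iff₀' (by positivity)).2 ((hWlb _).trans hu)
    rw [hφ, hφh, ← mul_sub, abs_mul, abs_of_pos one_half_pos]
    have hquad := abs_inner_apply_sub_inner_apply_le Wh W (u - u_ref)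
    calc 1 / 2 * |⟪u - u_ref, Wh (u - u_ref)⟫ - ⟪u - u_ref, W (u - u_ref)⟫|
        ≤ 1 / 2 * (‖Wh - W‖ * ‖u - u_ref‖ ^ 2) := by gcongr
      _ ≤ 1 / 2 * (ρ * (D ^ 2 / μ ^ 2)) := by gcongr
      _ = ρ * (D ^ 2 / μ ^ 2) / 2 := by ring
  have hgap := (isMinOn_iff.2 huhWmin).sub_le_of_abs_sub_le huW
    (hclose _ huhWS) (hclose _ huWS)
  linarith [mul_div_assoc ρ (D ^ 2) (μ ^ 2)]

/-- Suboptimality of the learned projection in the ideal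
objective: if `u_W` minimizes `φ` and `û_W` minimizes `φ̂` over `𝒰`, both lie
in the weighted ball `𝒮` of radius `D`, `W ⪰ μ²·I`, and `‖Ŵ − W‖ ≤ ρ`, then
`φ(û_W) − φ(u_W) ≤ ρD²/μ²`. -/
theorem learned_projection_objective_gap
    (m : ℕ) (u_ref : EuclideanSpace ℝ (Fin m))
    (W Wh : EuclideanSpace ℝ (Fin m) →L[ℝ] EuclideanSpace ℝ (Fin m))
    (hWsym : ∀ v w : EuclideanSpace ℝ (Fin m), ⟪W v, w⟫ = ⟪v, W w⟫)
    (hWhsym : ∀ v w : EuclideanSpace ℝ (Fin m), ⟪Wh v, w⟫ = ⟪v, Wh w⟫)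
    (μ : ℝ) (hμ : 0 < μ)
    (hWlb : ∀ v : EuclideanSpace ℝ (Fin m), μ ^ 2 * ‖v‖ ^ 2 ≤ ⟪v, W v⟫)
    (ρ : ℝ) (herr : ‖Wh - W‖ ≤ ρ)
    (φ φh : EuclideanSpace ℝ (Fin m) → ℝ)
    (hφ : ∀ u, φ u = (1 / 2) * ⟪u - u_ref, W (u - u_ref)⟫)
    (hφh : ∀ u, φh u = (1 / 2) * ⟪u - u_ref, Wh (u - u_ref)⟫)
    (𝒰 : Set (EuclideanSpace ℝ (Fin m)))
    (uW uhW : EuclideanSpace ℝ (Fin m))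
    (huW : uW ∈ 𝒰) (huhW : uhW ∈ 𝒰)
    (huWmin : ∀ u ∈ 𝒰, φ uW ≤ φ u)
    (huhWmin : ∀ u ∈ 𝒰, φh uhW ≤ φh u)
    (D : ℝ) (hD : 0 < D)
    (S : Set (EuclideanSpace ℝ (Fin m)))
    (hS : S = {u | ⟪u - u_ref, W (u - u_ref)⟫ ≤ D ^ 2})
    (huWS : uW ∈ S) (huhWS : uhW ∈ S) :
    φ uhW - φ uW ≤ ρ * D ^ 2 / μ ^ 2 :=
  learned_projection_objective_gap_general m u_ref W Wh μ hμ hWlb ρ herr φ φh hφ hφh 𝒰 uW uhW huW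
    huhWmin D S hS huWS huhWS
end

section
/- Under the hypotheses of the training-error comparison theorem — E = EuclideanSpace ℝ (Fin m); Q : E → ℝ twice continuously differentiable with Hessian H L₂-Lipschitz in operator norm and ∇Q(u_ref) = 0; W := −H(u_ref); 𝒮 := {u : W(u − u_ref, u − u_ref) ≤ D²}, D > 0; H(u)(v,v) ≤ −μ²·‖v‖² for all u ∈ 𝒮, μ > 0; ‖∇Q(u)‖ ≤ G on 𝒮; 𝒰 ⊆ E convex; u_W minimizing W(u − u_ref, u − u_ref) over 𝒰; û_W minimizing Ŵ(u − u_ref, u − u_ref) over 𝒰 with ‖Ŵ − W‖ ≤ ρ, 0 ≤ ρ < μ²; u_I ∈ 𝒰; u_W, û_W, u_I ∈ 𝒮 with the segment from u_W to û_W in 𝒮; δ := ‖u_W − u_ref‖_W > 0; ‖u_I − u_ref‖_W = β·δ with β > 1; c := (β² − 1)/2 — if additionally G·√(2ρ)·D/μ² + L₂·D³/(3·μ³) ≤ c·δ², then Q(û_W) ≥ Q(u_I); i.e., the learned Hessian-weighted projection still outperforms the Euclidean projection despite training error. -/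
/-!
Taylor's formula at the critical point `u_ref` gives `Q u = Q u_ref - ‖u - u_ref‖²_W / 2` up to
`L₂ ‖u - u_ref‖³ / 6 ≤ L₂ D³ / (6 μ³)` on `𝒮`, hence `Q u_W - Q u_I ≥ c δ² - L₂ D³ / (3 μ³)`.
The Pythagorean inequality for the `W`-projection `u_W`, combined with the optimality of `û_W` for
the `ρ`-close form `Ŵ`, gives `μ² ‖û_W - u_W‖² ≤ 2 ρ D² / μ²`, and the mean value theorem along the
segment `[u_W, û_W] ⊆ 𝒮` turns this into `Q u_W - Q û_W ≤ G √(2ρ) D / μ²`.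
-/

open Set Filter Topology

lemma abs_le_of_abs_deriv_deriv_le {φ φ' φ'' : ℝ → ℝ} {K b : ℝ} (hb : 0 ≤ b)
    (hφ : ∀ t, HasDerivAt φ (φ' t) t) (hφ' : ∀ t, HasDerivAt φ' (φ'' t) t)
    (h0 : φ 0 = 0) (h0' : φ' 0 = 0) (hφ'' : ∀ t ∈ Ico 0 b, |φ'' t| ≤ K * t) :
    |φ b| ≤ K * b ^ 3 / 6 := by
  have hB₂ (t : ℝ) : HasDerivAt (fun t => K * t ^ 2 / 2) (K * t) t :=
    (((hasDerivAt_pow 2 t).const_mul K).div_const 2).congr_deriv (by ring)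
  have hB₃ (t : ℝ) : HasDerivAt (fun t => K * t ^ 3 / 6) (K * t ^ 2 / 2) t :=
    (((hasDerivAt_pow 3 t).const_mul K).div_const 6).congr_deriv (by ring)
  have hφ'_le : ∀ t ∈ Icc 0 b, ‖φ' t‖ ≤ K * t ^ 2 / 2 :=
    image_norm_le_of_norm_deriv_right_le_deriv_boundary
      (fun t _ => (hφ' t).continuousAt.continuousWithinAt) (fun t _ => (hφ' t).hasDerivWithinAt)
      (by simp [h0']) hB₂ hφ''
  exact image_norm_le_of_norm_deriv_right_le_deriv_boundary
    (fun t _ => (hφ t).continuousAt.continuousWithinAt) (fun t _ => (hφ t).hasDerivWithinAt)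
    (by simp [h0]) hB₃ (fun t ht => hφ'_le t (Ico_subset_Icc_self ht))
    (right_mem_Icc.2 hb)

variable {E : Type*} [NormedAddCommGroup E] [NormedSpace ℝ E]

section Taylor

variable {Q : E → ℝ} {Q' : E → E →L[ℝ] ℝ} {H : E → E →L[ℝ] E →L[ℝ] ℝ} {L : ℝ}

lemma abs_taylor_two_sub_le (hQ : ∀ u, HasFDerivAt Q (Q' u) u)
    (hQ' : ∀ u, HasFDerivAt Q' (H u) u) (hH : ∀ u v, ‖H u - H v‖ ≤ L * ‖u - v‖) (x v : E) :
    |Q (x + v) - Q x - Q' x v - H x v v / 2| ≤ L * ‖v‖ ^ 3 / 6 := by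
  have hline (t : ℝ) : HasDerivAt (fun t : ℝ => x + t • v) v t := by
    simpa using ((hasDerivAt_id t).smul_const v).const_add x
  have hφ (t : ℝ) : HasDerivAt (fun t => Q (x + t • v) - Q x - t * Q' x v - t ^ 2 * H x v v / 2)
      (Q' (x + t • v) v - Q' x v - t * H x v v) t :=
    (((((hQ _).comp_hasDerivAt t (hline t)).sub_const (Q x)).sub
      ((hasDerivAt_id t).mul_const (Q' x v))).sub
      (((hasDerivAt_pow 2 t).mul_const (H x v v)).div_const 2)).congr_deriv
        (by simp only [one_mul, Nat.cast_ofNat, Nat.add_one_sub_one, pow_one]; ring)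
  have hφ' (t : ℝ) : HasDerivAt (fun t => Q' (x + t • v) v - Q' x v - t * H x v v)
      (H (x + t • v) v v - H x v v) t :=
    (((((hQ' _).comp_hasDerivAt t (hline t)).clm_apply (hasDerivAt_const t v)).sub_const
      (Q' x v)).sub ((hasDerivAt_id t).mul_const (H x v v))).congr_deriv (by simp)
  have hφ'' : ∀ t ∈ Ico (0 : ℝ) 1, |H (x + t • v) v v - H x v v| ≤ L * ‖v‖ ^ 3 * t := by
    intro t ht
    calc |H (x + t • v) v v - H x v v| = ‖(H (x + t • v) - H x) v v‖ := by simp [Real.norm_eq_abs]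
      _ ≤ ‖H (x + t • v) - H x‖ * ‖v‖ * ‖v‖ := (H (x + t • v) - H x).le_opNorm₂ v v
      _ ≤ L * (t * ‖v‖) * ‖v‖ * ‖v‖ := by
          gcongr
          simpa [norm_smul, abs_of_nonneg ht.1] using hH (x + t • v) x
      _ = L * ‖v‖ ^ 3 * t := by ring
  simpa using abs_le_of_abs_deriv_deriv_le zero_le_one hφ hφ' (by simp) (by simp) hφ''

lemma abs_sub_sub_half_le_of_norm_sub_le (hQ : ∀ u, HasFDerivAt Q (Q' u) u)
    (hQ' : ∀ u, HasFDerivAt Q' (H u) u) (hH : ∀ u v, ‖H u - H v‖ ≤ L * ‖u - v‖) (hL : 0 ≤ L)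
    {x u : E} (hx : Q' x = 0) {R : ℝ} (hu : ‖u - x‖ ≤ R) :
    |Q u - Q x - H x (u - x) (u - x) / 2| ≤ L * R ^ 3 / 6 := by
  have h := abs_taylor_two_sub_le hQ hQ' hH x (u - x)
  rw [add_sub_cancel, hx, zero_apply, sub_zero] at h
  exact h.trans (by gcongr)

end Taylor

section Projection

variable {W W' : E →L[ℝ] E →L[ℝ] ℝ} {𝒰 : Set E} {x a b : E}

lemma norm_le_div_of_apply_self_le {μ D : ℝ} (hμ : 0 < μ) (hD : 0 ≤ D)
    (hcoer : ∀ z, μ ^ 2 * ‖z‖ ^ 2 ≤ W z z) {z : E} (hz : W z z ≤ D ^ 2) : ‖z‖ ≤ D / μ := by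
  rw [le_div_iff₀ hμ, ← pow_le_pow_iff_left₀ (by positivity) hD two_ne_zero]
  linarith [hcoer z]

lemma apply_sub_add_apply_sub_le_of_isMinOn (h𝒰 : Convex ℝ 𝒰) (ha : a ∈ 𝒰) (hb : b ∈ 𝒰)
    (hmin : IsMinOn (fun u => W (u - x) (u - x)) 𝒰 a) :
    W (a - x) (a - x) + W (b - a) (b - a) ≤ W (b - x) (b - x) := by
  set s := W (a - x) (b - a) + W (b - a) (a - x)
  set q := W (b - a) (b - a)
  have hexp (t : ℝ) : W (a + t • (b - a) - x) (a + t • (b - a) - x)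
      = W (a - x) (a - x) + t * s + t ^ 2 * q := by
    rw [add_sub_right_comm]
    simp only [map_add, map_smul, add_apply, smul_apply, smul_eq_mul, s, q]
    ring
  have hslope : ∀ t ∈ Ioc (0 : ℝ) 1, 0 ≤ s + t * q := fun t ht => by
    have h := isMinOn_iff.1 hmin _ (h𝒰.add_smul_sub_mem ha hb ⟨ht.1.le, ht.2⟩)
    rw [hexp] at h
    exact nonneg_of_mul_nonneg_right (by linarith) ht.1
  -- First-order optimality: the directional derivative `s` of the objective towards `b` is `≥ 0`.
  have hs : 0 ≤ s := by
    have hlim : Tendsto (fun t : ℝ => s + t * q) (𝓝[>] 0) (𝓝 s) := by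
      have hcont : Continuous fun t : ℝ => s + t * q := by fun_prop
      exact (hcont.tendsto' 0 s (by simp)).mono_left nhdsWithin_le_nhds
    exact ge_of_tendsto hlim (eventually_of_mem (Ioc_mem_nhdsGT one_pos) hslope)
  have h1 := hexp 1
  rw [one_smul, add_sub_cancel] at h1
  linarith

lemma abs_apply_self_sub_apply_self_le (z : E) : |W' z z - W z z| ≤ ‖W' - W‖ * ‖z‖ ^ 2 := by
  rw [sq, ← mul_assoc, ← Real.norm_eq_abs]
  exact (W' - W).le_opNorm₂ z z

lemma mul_norm_sub_sq_le_of_isMinOn (h𝒰 : Convex ℝ 𝒰) (ha : a ∈ 𝒰) (hb : b ∈ 𝒰) {κ ρ : ℝ}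
    (hcoer : ∀ z, κ * ‖z‖ ^ 2 ≤ W z z) (hρ : ‖W' - W‖ ≤ ρ)
    (ha_min : IsMinOn (fun u => W (u - x) (u - x)) 𝒰 a)
    (hb_min : IsMinOn (fun u => W' (u - x) (u - x)) 𝒰 b) :
    κ * ‖b - a‖ ^ 2 ≤ ρ * (‖a - x‖ ^ 2 + ‖b - x‖ ^ 2) := by
  have hpyth := apply_sub_add_apply_sub_le_of_isMinOn h𝒰 ha hb ha_min
  have hb_le := isMinOn_iff.1 hb_min a ha
  have herr (z : E) : |W' z z - W z z| ≤ ρ * ‖z‖ ^ 2 :=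
    (abs_apply_self_sub_apply_self_le z).trans (by gcongr)
  linarith [hcoer (b - a), abs_le.1 (herr (a - x)), abs_le.1 (herr (b - x))]

lemma norm_sub_le_of_isMinOn (h𝒰 : Convex ℝ 𝒰) (ha : a ∈ 𝒰) (hb : b ∈ 𝒰) {μ ρ R : ℝ}
    (hμ : 0 < μ) (hρ0 : 0 ≤ ρ) (hcoer : ∀ z, μ ^ 2 * ‖z‖ ^ 2 ≤ W z z) (hρ : ‖W' - W‖ ≤ ρ)
    (ha_min : IsMinOn (fun u => W (u - x) (u - x)) 𝒰 a)
    (hb_min : IsMinOn (fun u => W' (u - x) (u - x)) 𝒰 b)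
    (hax : ‖a - x‖ ≤ R) (hbx : ‖b - x‖ ≤ R) :
    ‖b - a‖ ≤ Real.sqrt (2 * ρ) * R / μ := by
  have h := mul_norm_sub_sq_le_of_isMinOn h𝒰 ha hb hcoer hρ ha_min hb_min
  have hR : 0 ≤ R := (norm_nonneg _).trans hax
  have hax2 := pow_le_pow_left₀ (norm_nonneg _) hax 2
  have hbx2 := pow_le_pow_left₀ (norm_nonneg _) hbx 2
  rw [le_div_iff₀ hμ]
  calc ‖b - a‖ * μ = Real.sqrt ((‖b - a‖ * μ) ^ 2) := (Real.sqrt_sq (by positivity)).symm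
    _ ≤ Real.sqrt (2 * ρ * R ^ 2) := by
        gcongr
        calc (‖b - a‖ * μ) ^ 2 = μ ^ 2 * ‖b - a‖ ^ 2 := by ring
          _ ≤ ρ * (R ^ 2 + R ^ 2) := h.trans (by gcongr)
          _ = 2 * ρ * R ^ 2 := by ring
    _ = Real.sqrt (2 * ρ) * R := by rw [Real.sqrt_mul' _ (sq_nonneg R), Real.sqrt_sq hR]

end Projection

theorem learned_weighted_beats_euclidean_general
    (m : ℕ)
    (Q : EuclideanSpace ℝ (Fin m) → ℝ)
    (hQ : ContDiff ℝ 2 Q)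
    (u_ref : EuclideanSpace ℝ (Fin m))
    (H : EuclideanSpace ℝ (Fin m) →
      EuclideanSpace ℝ (Fin m) →L[ℝ] EuclideanSpace ℝ (Fin m) →L[ℝ] ℝ)
    (hH : ∀ u, H u = fderiv ℝ (fderiv ℝ Q) u)
    (L₂ : ℝ) (hL₂ : 0 < L₂)
    (hLip : ∀ u v, ‖H u - H v‖ ≤ L₂ * ‖u - v‖)
    (hgrad : fderiv ℝ Q u_ref = 0)
    (W : EuclideanSpace ℝ (Fin m) →L[ℝ] EuclideanSpace ℝ (Fin m) →L[ℝ] ℝ)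
    (hW : W = -H u_ref)
    (D : ℝ) (hD : 0 < D)
    (S : Set (EuclideanSpace ℝ (Fin m)))
    (hS : S = {u | W (u - u_ref) (u - u_ref) ≤ D ^ 2})
    (μ : ℝ) (hμ : 0 < μ)
    (hcurv : ∀ u ∈ S, ∀ v : EuclideanSpace ℝ (Fin m),
      H u v v ≤ -μ ^ 2 * ‖v‖ ^ 2)
    (G : ℝ) (hG0 : 0 ≤ G)
    (hGbound : ∀ u ∈ S, ‖fderiv ℝ Q u‖ ≤ G)
    (𝒰 : Set (EuclideanSpace ℝ (Fin m))) (h𝒰 : Convex ℝ 𝒰)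
    (uW uI uhW : EuclideanSpace ℝ (Fin m))
    (huW𝒰 : uW ∈ 𝒰) (huhW𝒰 : uhW ∈ 𝒰)
    (huWmin : ∀ u ∈ 𝒰, W (uW - u_ref) (uW - u_ref) ≤ W (u - u_ref) (u - u_ref))
    (Wh : EuclideanSpace ℝ (Fin m) →L[ℝ] EuclideanSpace ℝ (Fin m) →L[ℝ] ℝ)
    (ρ : ℝ) (hρ0 : 0 ≤ ρ)
    (herr : ‖Wh - W‖ ≤ ρ)
    (huhWmin : ∀ u ∈ 𝒰,
      Wh (uhW - u_ref) (uhW - u_ref) ≤ Wh (u - u_ref) (u - u_ref))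
    (huWS : uW ∈ S) (huhWS : uhW ∈ S) (huIS : uI ∈ S)
    (hseg : segment ℝ uW uhW ⊆ S)
    (δ : ℝ) (hδ : δ = Real.sqrt (W (uW - u_ref) (uW - u_ref)))
    (β : ℝ)
    (hβδ : Real.sqrt (W (uI - u_ref) (uI - u_ref)) = β * δ)
    (c : ℝ) (hc : c = (β ^ 2 - 1) / 2)
    (hcond : G * Real.sqrt (2 * ρ) * D / μ ^ 2
        + L₂ * D ^ 3 / (3 * μ ^ 3) ≤ c * δ ^ 2) :
    Q uhW ≥ Q uI := by
  have hcoer (z : EuclideanSpace ℝ (Fin m)) : μ ^ 2 * ‖z‖ ^ 2 ≤ W z z := by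
    have := hcurv u_ref (by rw [hS, mem_ofPred_eq, sub_self, map_zero]; positivity) z
    simp only [hW, neg_apply]
    linarith
  have hradius : ∀ u ∈ S, ‖u - u_ref‖ ≤ D / μ := fun u hu =>
    norm_le_div_of_apply_self_le hμ hD.le hcoer (by rw [hS] at hu; exact hu)
  have hQ' (u : EuclideanSpace ℝ (Fin m)) : HasFDerivAt Q (fderiv ℝ Q u) u :=
    (hQ.differentiable two_ne_zero u).hasFDerivAt
  have hQ'' (u : EuclideanSpace ℝ (Fin m)) : HasFDerivAt (fderiv ℝ Q) (H u) u :=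
    hH u ▸ ((hQ.fderiv_right le_rfl).differentiable one_ne_zero u).hasFDerivAt
  have htaylor : ∀ u ∈ S, |Q u - Q u_ref - H u_ref (u - u_ref) (u - u_ref) / 2|
      ≤ L₂ * (D / μ) ^ 3 / 6 := fun u hu =>
    abs_sub_sub_half_le_of_norm_sub_le hQ' hQ'' hLip hL₂.le hgrad (hradius u hu)
  have hdist : ‖uhW - uW‖ ≤ Real.sqrt (2 * ρ) * (D / μ) / μ :=
    norm_sub_le_of_isMinOn h𝒰 huW𝒰 huhW𝒰 hμ hρ0 hcoer herr (isMinOn_iff.2 huWmin)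
      (isMinOn_iff.2 huhWmin) (hradius uW huWS) (hradius uhW huhWS)
  have hmvt : |Q uhW - Q uW| ≤ G * ‖uhW - uW‖ := by
    simpa only [← Real.norm_eq_abs] using
      (convex_segment uW uhW).norm_image_sub_le_of_norm_fderiv_le
        (fun u _ => (hQ' u).differentiableAt) (fun u hu => hGbound u (hseg hu))
        (left_mem_segment ℝ uW uhW) (right_mem_segment ℝ uW uhW)
  have hsq (u : EuclideanSpace ℝ (Fin m)) :
      H u_ref (u - u_ref) (u - u_ref) = -Real.sqrt (W (u - u_ref) (u - u_ref)) ^ 2 := by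
    rw [Real.sq_sqrt ((by positivity : 0 ≤ μ ^ 2 * ‖u - u_ref‖ ^ 2).trans (hcoer _)), hW]
    simp
  have hTW := (abs_le.1 (htaylor uW huWS)).1
  have hTI := (abs_le.1 (htaylor uI huIS)).2
  rw [hsq, ← hδ] at hTW
  rw [hsq, hβδ] at hTI
  rw [hc] at hcond
  linear_combination hTI + hTW + (abs_le.1 hmvt).1 + mul_le_mul_of_nonneg_left hdist hG0 + hcond

/-- Sufficient condition for the learned Hessian-weighted
projection to still outperform the Euclidean projection despite training
error: if `G√(2ρ)D/μ² + L₂D³/(3μ³) ≤ c·δ²`, then `Q(û_W) ≥ Q(u_I)`. -/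
theorem learned_weighted_beats_euclidean
    (m : ℕ)
    (Q : EuclideanSpace ℝ (Fin m) → ℝ)
    (hQ : ContDiff ℝ 2 Q)
    (u_ref : EuclideanSpace ℝ (Fin m))
    (H : EuclideanSpace ℝ (Fin m) →
      EuclideanSpace ℝ (Fin m) →L[ℝ] EuclideanSpace ℝ (Fin m) →L[ℝ] ℝ)
    (hH : ∀ u, H u = fderiv ℝ (fderiv ℝ Q) u)
    (L₂ : ℝ) (hL₂ : 0 < L₂)
    (hLip : ∀ u v, ‖H u - H v‖ ≤ L₂ * ‖u - v‖)
    (hgrad : fderiv ℝ Q u_ref = 0)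
    (W : EuclideanSpace ℝ (Fin m) →L[ℝ] EuclideanSpace ℝ (Fin m) →L[ℝ] ℝ)
    (hW : W = -H u_ref)
    (D : ℝ) (hD : 0 < D)
    (S : Set (EuclideanSpace ℝ (Fin m)))
    (hS : S = {u | W (u - u_ref) (u - u_ref) ≤ D ^ 2})
    (μ : ℝ) (hμ : 0 < μ)
    (hcurv : ∀ u ∈ S, ∀ v : EuclideanSpace ℝ (Fin m),
      H u v v ≤ -μ ^ 2 * ‖v‖ ^ 2)
    (G : ℝ) (hG0 : 0 ≤ G)
    (hGbound : ∀ u ∈ S, ‖fderiv ℝ Q u‖ ≤ G)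
    (𝒰 : Set (EuclideanSpace ℝ (Fin m))) (h𝒰 : Convex ℝ 𝒰)
    (uW uI uhW : EuclideanSpace ℝ (Fin m))
    (huW𝒰 : uW ∈ 𝒰) (huI𝒰 : uI ∈ 𝒰) (huhW𝒰 : uhW ∈ 𝒰)
    (huWmin : ∀ u ∈ 𝒰, W (uW - u_ref) (uW - u_ref) ≤ W (u - u_ref) (u - u_ref))
    (Wh : EuclideanSpace ℝ (Fin m) →L[ℝ] EuclideanSpace ℝ (Fin m) →L[ℝ] ℝ)
    (hWhsym : ∀ v w : EuclideanSpace ℝ (Fin m), Wh v w = Wh w v)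
    (ρ : ℝ) (hρ0 : 0 ≤ ρ) (hρμ : ρ < μ ^ 2)
    (herr : ‖Wh - W‖ ≤ ρ)
    (huhWmin : ∀ u ∈ 𝒰,
      Wh (uhW - u_ref) (uhW - u_ref) ≤ Wh (u - u_ref) (u - u_ref))
    (huWS : uW ∈ S) (huhWS : uhW ∈ S) (huIS : uI ∈ S)
    (hseg : segment ℝ uW uhW ⊆ S)
    (δ : ℝ) (hδ : δ = Real.sqrt (W (uW - u_ref) (uW - u_ref)))
    (hδpos : 0 < δ)
    (β : ℝ) (hβ : 1 < β)
    (hβδ : Real.sqrt (W (uI - u_ref) (uI - u_ref)) = β * δ)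
    (c : ℝ) (hc : c = (β ^ 2 - 1) / 2)
    (hcond : G * Real.sqrt (2 * ρ) * D / μ ^ 2
        + L₂ * D ^ 3 / (3 * μ ^ 3) ≤ c * δ ^ 2) :
    Q uhW ≥ Q uI :=
  learned_weighted_beats_euclidean_general m Q hQ u_ref H hH L₂ hL₂ hLip hgrad W hW D hD S hS μ hμ
    hcurv G hG0 hGbound 𝒰 h𝒰 uW uI uhW huW𝒰 huhW𝒰 huWmin Wh ρ hρ0 herr huhWmin huWS huhWS huIS hseg
    δ hδ β hβδ c hc hcond
end
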